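/- arXiv:math/0511456 — 2 statements merged into one kernel-verified Lean document; each statement's English description precedes it below -/
import Mathlib

section
/- The map x ↦ m_{xe} is an isometric embedding of the pointed metric space (X, d, e) into the Lipschitz-free space F(X), and the closed linear span of its image equals F(X). -/
/-- The elementary molecule `m_{pq} = χ_{p} - χ_{q}`. -/
noncomputable def mol {X : Type*} (p q : X) : X →₀ ℝ :=
  Finsupp.single p 1 - Finsupp.single q 1

/-- The Arens-Eells seminorm. -/
noncomputable def aeNorm {X : Type*} [MetricSpace X] (m : X →₀ ℝ) : ℝ :=
  sInf { c | ∃ (n : ℕ) (a : Fin n → ℝ) (p q : Fin n → X),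
    m = ∑ i, a i • mol (p i) (q i) ∧ c = ∑ i, |a i| * dist (p i) (q i) }

/-!
Since `m_{xe} - m_{ye} = m_{xy}`, the isometry reduces to `‖m_{xy}‖ = d(x, y)`. The upper bound
is the one-term representation; for the lower bound, pair any representation
`m_{xy} = Σ aᵢ m_{pᵢqᵢ}` with the 1-Lipschitz function `d(·, y)`: it gives
`d(x, y) ≤ Σ |aᵢ| d(pᵢ, qᵢ)`. For the span, a finitely supported `m` with total mass zero equals
`Σₓ m(x) m_{xe}`, the correction term `(Σₓ m(x)) χ_{e}` vanishing.
-/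

lemma mol_sub_mol {X : Type*} (x y z : X) : mol x z - mol y z = mol x y := by
  unfold mol; abel

lemma linearCombination_mol {X : Type*} (f : X → ℝ) (p q : X) :
    Finsupp.linearCombination ℝ f (mol p q) = f p - f q := by
  simp [mol]

lemma sum_smul_mol {X : Type*} (m : X →₀ ℝ) (e : X) :
    (m.sum fun x c => c • mol x e) =
      m - Finsupp.linearCombination ℝ (fun _ => (1 : ℝ)) m • Finsupp.single e 1 := by
  simp only [mol, smul_sub, Finsupp.sum_sub, Finsupp.linearCombination_apply, smul_eq_mul,
    mul_one, Finsupp.smul_single, Finsupp.sum_single]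
  rw [Finsupp.sum, Finsupp.sum, Finsupp.single_finsetSum]

lemma span_range_mol_eq_ker {X : Type*} (e : X) :
    Submodule.span ℝ (Set.range fun x : X => mol x e) =
      LinearMap.ker (Finsupp.linearCombination ℝ (fun _ : X => (1 : ℝ))) := by
  apply le_antisymm
  · rw [Submodule.span_le]
    rintro _ ⟨x, rfl⟩
    simp [linearCombination_mol]
  · intro m hm
    rw [LinearMap.mem_ker] at hm
    have hrep : m = m.sum fun x c => c • mol x e := by
      rw [sum_smul_mol, hm, zero_smul, sub_zero]
    rw [hrep]
    exact Submodule.finsuppSum_mem _ _ _ _ fun x _ =>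
      Submodule.smul_mem _ _ (Submodule.subset_span ⟨x, rfl⟩)

lemma linearCombination_le_of_eq_sum {X : Type*} [PseudoMetricSpace X] {f : X → ℝ}
    (hf : LipschitzWith 1 f) {m : X →₀ ℝ} {n : ℕ} {a : Fin n → ℝ} {p q : Fin n → X}
    (hm : m = ∑ i, a i • mol (p i) (q i)) :
    Finsupp.linearCombination ℝ f m ≤ ∑ i, |a i| * dist (p i) (q i) := by
  rw [hm, map_sum]
  refine Finset.sum_le_sum fun i _ => ?_
  rw [map_smul, linearCombination_mol, smul_eq_mul]
  calc a i * (f (p i) - f (q i)) ≤ |a i| * |f (p i) - f (q i)| := by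
        rw [← abs_mul]; exact le_abs_self _
    _ ≤ |a i| * dist (p i) (q i) := by
        gcongr; simpa [Real.dist_eq] using hf.dist_le_mul (p i) (q i)

lemma aeNorm_mol {X : Type*} [MetricSpace X] (x y : X) : aeNorm (mol x y) = dist x y := by
  have hsingle : dist x y ∈ { c | ∃ (n : ℕ) (a : Fin n → ℝ) (p q : Fin n → X),
      mol x y = ∑ i, a i • mol (p i) (q i) ∧ c = ∑ i, |a i| * dist (p i) (q i) } :=
    ⟨1, fun _ => 1, fun _ => x, fun _ => y, by simp, by simp⟩
  refine le_antisymm (csInf_le ⟨0, ?_⟩ hsingle) (le_csInf ⟨_, hsingle⟩ ?_)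
  · rintro c ⟨n, a, p, q, -, rfl⟩
    positivity
  · rintro c ⟨n, a, p, q, hm, rfl⟩
    have h := linearCombination_le_of_eq_sum (LipschitzWith.dist_left y) hm
    rwa [linearCombination_mol, dist_self, sub_zero] at h

/-- The map `x ↦ m_{xe}` is an isometric embedding of the pointed metric space `(X, d, e)`
into the Lipschitz-free space `F(X)` (the completion of the molecules under the Arens-Eells
norm), and the closed linear span of its image equals `F(X)`: at the dense level this says
that `aeNorm (m_{xe} - m_{ye}) = d(x,y)` for all `x, y`, and that the linear span of the
`m_{xe}` is the whole space of molecules (the kernel of the coefficient-sum functional),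
whose completion is `F(X)`. -/
theorem molEmbedding_isometry_and_span {X : Type*} [MetricSpace X] (e : X) :
    (∀ x y : X, aeNorm (mol x e - mol y e) = dist x y) ∧
    Submodule.span ℝ (Set.range fun x : X => mol x e) =
      LinearMap.ker (Finsupp.linearCombination ℝ (fun _ : X => (1 : ℝ))) :=
  ⟨fun x y => by rw [mol_sub_mol, aeNorm_mol], span_range_mol_eq_ker e⟩
end

section
/- The Arens-Eells norm of a molecule m depends only on distances within a set containing its support: for any e ∈ X and any finite S ⊇ supp(m), ||m|| = sup { Σ_{x} f(x) m(x) : f ∈ Lip_0(S ∪ {e}, d, e), f is 1-Lipschitz }. -/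
/-!
The inequality `≥` holds because a function that is 1-Lipschitz on `S ∪ {e}` extends
(McShane) to a 1-Lipschitz function on `X`, and pairing a 1-Lipschitz function with
`∑ aᵢ • mol pᵢ qᵢ` gives at most `∑ |aᵢ| d(pᵢ, qᵢ)`. For `≤`, the Arens-Eells norm is
sublinear on the space of molecules, so by Hahn-Banach there is a linear functional `g`
dominated by it with `g m = ‖m‖`; the potential `x ↦ g (mol x e)` is then 1-Lipschitz,
vanishes at `e`, and pairs with `m` to `‖m‖`.
-/

/-- A molecule: finitely supported real function summing to zero. -/
def IsMolecule {X : Type*} (m : X →₀ ℝ) : Prop := m.sum (fun _ v => v) = 0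

namespace ArensEells

open Pointwise

variable {X : Type*}

noncomputable def pair (g : X → ℝ) : (X →₀ ℝ) →ₗ[ℝ] ℝ :=
  Finsupp.linearCombination ℝ g

lemma pair_apply (g : X → ℝ) (m : X →₀ ℝ) : pair g m = m.sum fun x v => g x * v := by
  rw [pair, Finsupp.linearCombination_apply]
  exact Finsupp.sum_congr fun x _ => mul_comm _ _

lemma pair_mol (g : X → ℝ) (p q : X) : pair g (mol p q) = g p - g q := by
  simp [pair, mol]

/-- Off this submodule `aeNorm` is the junk value `sInf ∅ = 0`, so it is sublinear only here. -/
noncomputable def molecules (X : Type*) : Submodule ℝ (X →₀ ℝ) :=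
  LinearMap.ker (pair fun _ : X => (1 : ℝ))

lemma mem_molecules_iff {m : X →₀ ℝ} : m ∈ molecules X ↔ IsMolecule m := by
  simp only [molecules, LinearMap.mem_ker, pair_apply, one_mul, IsMolecule]

lemma mol_mem_molecules (p q : X) : mol p q ∈ molecules X := by
  rw [molecules, LinearMap.mem_ker, pair_mol, sub_self]

lemma sum_smul_mol_eq (e : X) {m : X →₀ ℝ} (hm : IsMolecule m) :
    ∑ x ∈ m.support, m x • mol x e = m := by
  have hsum : ∑ x ∈ m.support, m x = 0 := hm
  simp only [mol, smul_sub, Finset.sum_sub_distrib, Finsupp.smul_single_one]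
  rw [← Finsupp.single_finsetSum, hsum, Finsupp.single_zero, sub_zero]
  exact Finsupp.sum_single m

noncomputable def potential (g : molecules X →ₗ[ℝ] ℝ) (e x : X) : ℝ :=
  g ⟨mol x e, mol_mem_molecules x e⟩

lemma potential_sub (g : molecules X →ₗ[ℝ] ℝ) (e x y : X) :
    potential g e x - potential g e y = g ⟨mol x y, mol_mem_molecules x y⟩ := by
  rw [potential, potential, ← map_sub]
  congr 1
  ext1
  simp only [Submodule.coe_sub, mol]
  abel

lemma potential_self (g : molecules X →ₗ[ℝ] ℝ) (e : X) : potential g e e = 0 := by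
  have hmol : (⟨mol e e, mol_mem_molecules e e⟩ : molecules X) = 0 := Subtype.ext (sub_self _)
  rw [potential, hmol, map_zero]

lemma sum_potential_mul (g : molecules X →ₗ[ℝ] ℝ) (e : X) {m : X →₀ ℝ} (hm : IsMolecule m) :
    (m.sum fun x v => potential g e x * v) = g ⟨m, mem_molecules_iff.mpr hm⟩ := by
  have hdecomp : (⟨m, mem_molecules_iff.mpr hm⟩ : molecules X) =
      ∑ x ∈ m.support, m x • ⟨mol x e, mol_mem_molecules x e⟩ := by
    ext1
    simp only [Submodule.coe_sum, Submodule.coe_smul, sum_smul_mol_eq e hm]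
  rw [hdecomp, map_sum]
  exact Finset.sum_congr rfl fun x _ => by rw [map_smul, smul_eq_mul, mul_comm]; rfl

variable [MetricSpace X]

def costs (m : X →₀ ℝ) : Set ℝ :=
  { c | ∃ (n : ℕ) (a : Fin n → ℝ) (p q : Fin n → X),
    m = ∑ i, a i • mol (p i) (q i) ∧ c = ∑ i, |a i| * dist (p i) (q i) }

lemma aeNorm_eq_sInf_costs (m : X →₀ ℝ) : aeNorm m = sInf (costs m) := rfl

lemma nonneg_of_mem_costs {m : X →₀ ℝ} {c : ℝ} (hc : c ∈ costs m) : 0 ≤ c := by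
  obtain ⟨n, a, p, q, -, rfl⟩ := hc
  exact Finset.sum_nonneg fun i _ => mul_nonneg (abs_nonneg _) dist_nonneg

lemma bddBelow_costs (m : X →₀ ℝ) : BddBelow (costs m) :=
  ⟨0, fun _ => nonneg_of_mem_costs⟩

lemma aeNorm_nonneg (m : X →₀ ℝ) : 0 ≤ aeNorm m :=
  Real.sInf_nonneg fun _ => nonneg_of_mem_costs

lemma sum_mem_costs {ι : Type*} [Fintype ι] (a : ι → ℝ) (p q : ι → X) :
    ∑ i, |a i| * dist (p i) (q i) ∈ costs (∑ i, a i • mol (p i) (q i)) := by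
  let E := (Fintype.equivFin ι).symm
  exact ⟨Fintype.card ι, a ∘ E, p ∘ E, q ∘ E,
    (E.sum_comp fun i => a i • mol (p i) (q i)).symm,
    (E.sum_comp fun i => |a i| * dist (p i) (q i)).symm⟩

lemma zero_mem_costs_zero : (0 : ℝ) ∈ costs (0 : X →₀ ℝ) :=
  ⟨0, Fin.elim0, Fin.elim0, Fin.elim0, by simp, by simp⟩

lemma aeNorm_zero : aeNorm (0 : X →₀ ℝ) = 0 :=
  le_antisymm (csInf_le (bddBelow_costs _) zero_mem_costs_zero) (aeNorm_nonneg _)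

lemma costs_nonempty {m : X →₀ ℝ} (hm : IsMolecule m) : (costs m).Nonempty := by
  rcases eq_or_ne m 0 with rfl | hne
  · exact ⟨0, zero_mem_costs_zero⟩
  obtain ⟨e, -⟩ := Finsupp.support_nonempty_iff.mpr hne
  have h := sum_mem_costs (fun x : m.support => m x) (fun x => (x : X)) fun _ => e
  rw [Finset.sum_coe_sort m.support fun x => m x • mol x e, sum_smul_mol_eq e hm] at h
  exact ⟨_, h⟩

lemma aeNorm_mol_le (p q : X) : aeNorm (mol p q) ≤ dist p q :=
  csInf_le (bddBelow_costs _) ⟨1, fun _ => 1, fun _ => p, fun _ => q, by simp, by simp⟩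

lemma smul_mem_costs {m : X →₀ ℝ} {c : ℝ} (hc : c ∈ costs m) (t : ℝ) :
    |t| * c ∈ costs (t • m) := by
  obtain ⟨n, a, p, q, rfl, rfl⟩ := hc
  refine ⟨n, fun i => t * a i, p, q, ?_, ?_⟩
  · simp only [Finset.smul_sum, smul_smul]
  · simp only [Finset.mul_sum, abs_mul, mul_assoc]

lemma costs_smul {t : ℝ} (ht : 0 < t) (m : X →₀ ℝ) : costs (t • m) = t • costs m := by
  ext c
  constructor
  · intro hc
    have h := smul_mem_costs hc t⁻¹
    rw [smul_smul, inv_mul_cancel₀ ht.ne', one_smul, abs_of_pos (inv_pos.mpr ht)] at h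
    exact ⟨t⁻¹ * c, h, by simp [ht.ne']⟩
  · rintro ⟨c, hc, rfl⟩
    show t * c ∈ _
    simpa only [abs_of_pos ht] using smul_mem_costs hc t

lemma aeNorm_smul {t : ℝ} (ht : 0 < t) (m : X →₀ ℝ) : aeNorm (t • m) = t * aeNorm m := by
  rw [aeNorm_eq_sInf_costs, costs_smul ht, Real.sInf_smul_of_nonneg ht.le, smul_eq_mul,
    aeNorm_eq_sInf_costs]

lemma costs_add_subset (m₁ m₂ : X →₀ ℝ) : costs m₁ + costs m₂ ⊆ costs (m₁ + m₂) := by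
  rintro _ ⟨_, ⟨n₁, a₁, p₁, q₁, rfl, rfl⟩, _, ⟨n₂, a₂, p₂, q₂, rfl, rfl⟩, rfl⟩
  simpa only [Fintype.sum_sum_type, Sum.elim_inl, Sum.elim_inr] using
    sum_mem_costs (Sum.elim a₁ a₂) (Sum.elim p₁ p₂) (Sum.elim q₁ q₂)

lemma aeNorm_add_le {m₁ m₂ : X →₀ ℝ} (h₁ : IsMolecule m₁) (h₂ : IsMolecule m₂) :
    aeNorm (m₁ + m₂) ≤ aeNorm m₁ + aeNorm m₂ := by
  rw [aeNorm_eq_sInf_costs, aeNorm_eq_sInf_costs, aeNorm_eq_sInf_costs,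
    ← csInf_add (costs_nonempty h₁) (bddBelow_costs _) (costs_nonempty h₂) (bddBelow_costs _)]
  exact csInf_le_csInf (bddBelow_costs _) ((costs_nonempty h₁).add (costs_nonempty h₂))
    (costs_add_subset m₁ m₂)

lemma pair_le_aeNorm {g : X → ℝ} (hg : LipschitzWith 1 g) {m : X →₀ ℝ} (hm : IsMolecule m) :
    pair g m ≤ aeNorm m := by
  refine le_csInf (costs_nonempty hm) ?_
  rintro _ ⟨n, a, p, q, rfl, rfl⟩
  simp only [map_sum, map_smul, pair_mol, smul_eq_mul]
  refine Finset.sum_le_sum fun i _ => ?_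
  calc a i * (g (p i) - g (q i)) ≤ |a i| * |g (p i) - g (q i)| := (le_abs_self _).trans_eq
        (abs_mul _ _)
    _ ≤ |a i| * dist (p i) (q i) := by
        gcongr
        simpa [Real.dist_eq] using hg.dist_le_mul (p i) (q i)

lemma sum_le_aeNorm_of_lipschitzOnWith {m : X →₀ ℝ} (hm : IsMolecule m) {f : X → ℝ}
    {T : Set X} (hf : LipschitzOnWith 1 f T) (hT : (m.support : Set X) ⊆ T) :
    (m.sum fun x v => f x * v) ≤ aeNorm m := by
  obtain ⟨g, hg, hfg⟩ := hf.extend_real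
  have hsum : (m.sum fun x v => f x * v) = m.sum fun x v => g x * v :=
    Finset.sum_congr rfl fun x hx => by simp only [hfg (hT hx)]
  rw [hsum, ← pair_apply]
  exact pair_le_aeNorm hg hm

lemma exists_linear_le_aeNorm {m : X →₀ ℝ} (hm : IsMolecule m) :
    ∃ g : molecules X →ₗ[ℝ] ℝ, (∀ v : molecules X, g v ≤ aeNorm (v : X →₀ ℝ)) ∧
      g ⟨m, mem_molecules_iff.mpr hm⟩ = aeNorm m := by
  set m₀ : molecules X := ⟨m, mem_molecules_iff.mpr hm⟩
  have hker : ∀ c : ℝ, c • m₀ = 0 → c • aeNorm m = 0 := by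
    intro c hc
    rcases smul_eq_zero.mp hc with rfl | hm₀
    · exact zero_smul _ _
    · rw [show m = 0 from congrArg Subtype.val hm₀, aeNorm_zero, smul_zero]
  obtain ⟨g, hg_ext, hg_le⟩ := exists_extension_of_le_sublinear
    (LinearPMap.mkSpanSingleton' m₀ (aeNorm m) hker) (fun v => aeNorm (v : X →₀ ℝ))
    (fun c hc v => aeNorm_smul hc _)
    (fun v w => aeNorm_add_le (mem_molecules_iff.mp v.2) (mem_molecules_iff.mp w.2))
    (by
      rintro ⟨_, hv⟩
      obtain ⟨c, rfl⟩ := Submodule.mem_span_singleton.mp hv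
      rw [LinearPMap.mkSpanSingleton'_apply, RingHom.id_apply, smul_eq_mul]
      rcases le_or_gt c 0 with hc | hc
      · exact (mul_nonpos_of_nonpos_of_nonneg hc (aeNorm_nonneg m)).trans (aeNorm_nonneg _)
      · exact (aeNorm_smul hc m).ge)
  refine ⟨g, hg_le, ?_⟩
  rw [hg_ext ⟨m₀, Submodule.mem_span_singleton_self m₀⟩]
  exact LinearPMap.mkSpanSingleton'_apply_self _ _ _ _

lemma lipschitzWith_potential {g : molecules X →ₗ[ℝ] ℝ}
    (hg : ∀ v : molecules X, g v ≤ aeNorm (v : X →₀ ℝ)) (e : X) :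
    LipschitzWith 1 (potential g e) :=
  LipschitzWith.of_le_add fun x y => by
    rw [← sub_le_iff_le_add', potential_sub]
    exact (hg _).trans (aeNorm_mol_le x y)

lemma exists_lipschitzWith_sum_mul_eq_aeNorm (e : X) {m : X →₀ ℝ}
    (hm : IsMolecule m) :
    ∃ f : X → ℝ, LipschitzWith 1 f ∧ f e = 0 ∧ (m.sum fun x v => f x * v) = aeNorm m := by
  obtain ⟨g, hg_le, hgm⟩ := exists_linear_le_aeNorm hm
  exact ⟨potential g e, lipschitzWith_potential hg_le e, potential_self g e,
    (sum_potential_mul g e hm).trans hgm⟩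

end ArensEells

open ArensEells in
/-- The Arens-Eells norm of a molecule `m` depends only on distances within a set containing
its support: for any `e ∈ X` and any finite `S ⊇ supp(m)`,
`‖m‖ = sup { Σ_x f(x) m(x) : f ∈ [Lip₀(S ∪ {e}, d, e)]₁ }`. -/
theorem aeNorm_eq_sup_on_support {X : Type*} [MetricSpace X] (e : X) (m : X →₀ ℝ)
    (hm : IsMolecule m) (S : Finset X) (hS : (m.support : Set X) ⊆ (S : Set X)) :
    aeNorm m = sSup { s : ℝ | ∃ f : X → ℝ,
      LipschitzOnWith 1 f ((S : Set X) ∪ {e}) ∧ f e = 0 ∧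
      s = m.sum (fun x v => f x * v) } := by
  obtain ⟨φ, hφ, hφe, hφm⟩ := exists_lipschitzWith_sum_mul_eq_aeNorm e hm
  symm
  refine IsGreatest.csSup_eq ⟨⟨φ, hφ.lipschitzOnWith, hφe, hφm.symm⟩, ?_⟩
  rintro _ ⟨f, hf, -, rfl⟩
  exact sum_le_aeNorm_of_lipschitzOnWith hm hf (hS.trans Set.subset_union_left)
end
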